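/- In the underlying (unsigned) graph W of the gadget (Figure 2), every induced forest has at most 5 vertices. -/
import Mathlib


open SimpleGraph

/- Vertices of the underlying graph `W` of the gadget of Figure 2: `0 = u`, `1 = v`, `2 = w`,
`3 = z`, `4 = t`, `5 = x₁`, `6 = x₂`, `7 = x₃`, `8 = x₄`, `9 = x₅`. -/

/-- The edges of `W`: `wxᵢ` for `i = 1..5`; the 5-cycle `x₁x₂x₃x₄x₅`; `zx₂, zx₃, zu, zv`;
`tx₄, tx₅, tu, tv`; `ux₁, ux₂, ux₅, uv`; `vx₃, vx₄`. -/
def edgesW : Finset (Sym2 (Fin 10)) :=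
  {s(2, 5), s(2, 6), s(2, 7), s(2, 8), s(2, 9),
   s(5, 6), s(6, 7), s(7, 8), s(8, 9), s(5, 9),
   s(3, 6), s(3, 7), s(3, 0), s(3, 1),
   s(4, 8), s(4, 9), s(4, 0), s(4, 1),
   s(0, 5), s(0, 6), s(0, 9), s(0, 1),
   s(1, 7), s(1, 8)}

/-- The underlying (unsigned) graph `W` of the gadget of Figure 2. -/
def W : SimpleGraph (Fin 10) := SimpleGraph.fromEdgeSet ↑edgesW

/-- A vertex set induces a forest if the induced subgraph contains no cycle. -/
def InducedForest (S : Set (Fin 10)) : Prop :=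
  ¬ ∃ (v : Fin 10) (c : W.Walk v v), c.IsCycle ∧ ∀ x ∈ c.support, x ∈ S

instance : DecidableRel W.Adj := fun a b =>
  decidable_of_iff (s(a, b) ∈ edgesW ∧ a ≠ b) (by simp [W])

lemma tri {a b c : Fin 10} (hab : W.Adj a b) (hbc : W.Adj b c) (hca : W.Adj c a)
    (hac : a ≠ c) (S : Set (Fin 10)) (ha : a ∈ S) (hb : b ∈ S) (hc : c ∈ S) :
    ∃ (v : Fin 10) (w : W.Walk v v), w.IsCycle ∧ ∀ x ∈ w.support, x ∈ S := by
  refine ⟨a, .cons hab (.cons hbc (.cons hca .nil)), ?_, ?_⟩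
  · constructor
    · constructor
      · simp [Walk.isTrail_def, Sym2.eq_iff, hab.ne, hbc.ne, hca.ne, hac, Ne.symm hac, hab.ne']
      · simp
    · simp [hab.ne', hbc.ne, hac, Ne.symm hac]
  · simp only [Walk.support_cons, Walk.support_nil, List.mem_cons]
    rintro x (rfl|rfl|rfl|rfl|h) <;> first | assumption | simp at h

lemma pent {a b c d e : Fin 10} (h1 : W.Adj a b) (h2 : W.Adj b c) (h3 : W.Adj c d)
    (h4 : W.Adj d e) (h5 : W.Adj e a)
    (n1 : a ≠ c) (n2 : a ≠ d) (n3 : b ≠ d) (n4 : b ≠ e) (n5 : c ≠ e)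
    (S : Set (Fin 10)) (ha : a ∈ S) (hb : b ∈ S) (hc : c ∈ S) (hd : d ∈ S) (he : e ∈ S) :
    ∃ (v : Fin 10) (w : W.Walk v v), w.IsCycle ∧ ∀ x ∈ w.support, x ∈ S := by
  refine ⟨a, .cons h1 (.cons h2 (.cons h3 (.cons h4 (.cons h5 .nil)))), ?_, ?_⟩
  · constructor
    · constructor
      · simp [Walk.isTrail_def, Sym2.eq_iff, h1.ne, h2.ne, h3.ne, h4.ne, h5.ne,
          h1.ne', h2.ne', h3.ne', h4.ne', h5.ne',
          n1, n2, n3, n4, n5, Ne.symm n1, Ne.symm n2, Ne.symm n3, Ne.symm n4, Ne.symm n5]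
      · simp
    · simp [h1.ne', h2.ne, h3.ne, h4.ne, h5.ne, n1, n2, n3, n4, n5,
        Ne.symm n1, Ne.symm n2, Ne.symm n3, Ne.symm n4, Ne.symm n5]
  · simp only [Walk.support_cons, Walk.support_nil, List.mem_cons]
    rintro x (rfl|rfl|rfl|rfl|rfl|rfl|h) <;> first | assumption | simp at h

lemma hex {a b c d e f : Fin 10} (h1 : W.Adj a b) (h2 : W.Adj b c) (h3 : W.Adj c d)
    (h4 : W.Adj d e) (h5 : W.Adj e f) (h6 : W.Adj f a)
    (n1 : a ≠ c) (n2 : a ≠ d) (n3 : a ≠ e) (n4 : b ≠ d) (n5 : b ≠ e) (n6 : b ≠ f)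
    (n7 : c ≠ e) (n8 : c ≠ f) (n9 : d ≠ f)
    (S : Set (Fin 10)) (ha : a ∈ S) (hb : b ∈ S) (hc : c ∈ S) (hd : d ∈ S) (he : e ∈ S)
    (hf : f ∈ S) :
    ∃ (v : Fin 10) (w : W.Walk v v), w.IsCycle ∧ ∀ x ∈ w.support, x ∈ S := by
  refine ⟨a, .cons h1 (.cons h2 (.cons h3 (.cons h4 (.cons h5 (.cons h6 .nil))))), ?_, ?_⟩
  · constructor
    · constructor
      · simp [Walk.isTrail_def, Sym2.eq_iff, h1.ne, h2.ne, h3.ne, h4.ne, h5.ne, h6.ne,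
          h1.ne', h2.ne', h3.ne', h4.ne', h5.ne', h6.ne',
          n1, n2, n3, n4, n5, n6, n7, n8, n9, Ne.symm n1, Ne.symm n2, Ne.symm n3,
          Ne.symm n4, Ne.symm n5, Ne.symm n6, Ne.symm n7, Ne.symm n8, Ne.symm n9]
      · simp
    · simp [h1.ne', h2.ne, h3.ne, h4.ne, h5.ne, h6.ne, n1, n2, n3, n4, n5, n6, n7, n8, n9,
        Ne.symm n1, Ne.symm n2, Ne.symm n3, Ne.symm n4, Ne.symm n5, Ne.symm n6,
        Ne.symm n7, Ne.symm n8, Ne.symm n9]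
  · simp only [Walk.support_cons, Walk.support_nil, List.mem_cons]
    rintro x (rfl|rfl|rfl|rfl|rfl|rfl|rfl|h) <;> first | assumption | simp at h

lemma coverB : ∀ m0 m1 m2 m3 m4 m5 m6 m7 m8 m9 : Bool,
    6 ≤ (cond m0 1 0) + (cond m1 1 0) + (cond m2 1 0) + (cond m3 1 0) + (cond m4 1 0)
      + (cond m5 1 0) + (cond m6 1 0) + (cond m7 1 0) + (cond m8 1 0) + (cond m9 1 0) →
    (m0 && m1 && m3) = true ∨ (m0 && m1 && m4) = true ∨
    (m0 && m3 && m6) = true ∨ (m0 && m4 && m9) = true ∨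
    (m0 && m5 && m6) = true ∨ (m0 && m5 && m9) = true ∨
    (m1 && m3 && m7) = true ∨ (m1 && m4 && m8) = true ∨
    (m1 && m7 && m8) = true ∨ (m2 && m5 && m6) = true ∨
    (m2 && m5 && m9) = true ∨ (m2 && m6 && m7) = true ∨
    (m2 && m7 && m8) = true ∨ (m2 && m8 && m9) = true ∨
    (m3 && m6 && m7) = true ∨ (m4 && m8 && m9) = true ∨
    (m0 && m3 && m7 && m2 && m5) = true ∨
    (m0 && m4 && m8 && m2 && m5) = true ∨
    (m0 && m3 && m7 && m8 && m4) = true ∨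
    (m1 && m3 && m6 && m2 && m9 && m4) = true ∨
    (m1 && m3 && m6 && m5 && m9 && m4) = true ∨
    (m1 && m3 && m6 && m5 && m9 && m8) = true ∨
    (m1 && m4 && m9 && m5 && m6 && m7) = true := by decide

/-- Every induced forest of `W` has at most 5 vertices. -/
theorem stmt15 (S : Finset (Fin 10)) (h : InducedForest ↑S) : S.card ≤ 5 := by
  rw [InducedForest] at h
  by_contra hle
  push_neg at hle
  have h6 : 6 ≤ S.card := hle
  have hcard : S.card = ∑ i : Fin 10, if i ∈ S then 1 else 0 := by
    have hS : S = Finset.univ.filter (· ∈ S) := by simp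
    nth_rewrite 1 [hS]
    rw [Finset.card_filter]
  have hsum : 6 ≤ (cond (decide ((0:Fin 10) ∈ S)) 1 0) + (cond (decide ((1:Fin 10) ∈ S)) 1 0)
      + (cond (decide ((2:Fin 10) ∈ S)) 1 0) + (cond (decide ((3:Fin 10) ∈ S)) 1 0)
      + (cond (decide ((4:Fin 10) ∈ S)) 1 0) + (cond (decide ((5:Fin 10) ∈ S)) 1 0)
      + (cond (decide ((6:Fin 10) ∈ S)) 1 0) + (cond (decide ((7:Fin 10) ∈ S)) 1 0)
      + (cond (decide ((8:Fin 10) ∈ S)) 1 0) + (cond (decide ((9:Fin 10) ∈ S)) 1 0) := by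
    rw [hcard] at h6
    simp only [Fin.sum_univ_succ, Fin.sum_univ_zero, Nat.add_zero, Nat.add_assoc] at h6
    simp only [Bool.cond_decide, Nat.add_assoc]
    exact h6
  have hcov := coverB _ _ _ _ _ _ _ _ _ _ hsum
  simp only [Bool.and_eq_true, decide_eq_true_eq, and_assoc] at hcov
  rcases hcov with hc|hc|hc|hc|hc|hc|hc|hc|hc|hc|hc|hc|hc|hc|hc|hc|hc|hc|hc|hc|hc|hc|hc
  · obtain ⟨hx1,hx2,hx3⟩ := hc
    exact h (tri (a:=0) (b:=1) (c:=3) (by decide) (by decide) (by decide) (by decide) ↑S (Finset.mem_coe.mpr hx1) (Finset.mem_coe.mpr hx2) (Finset.mem_coe.mpr hx3))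
  · obtain ⟨hx1,hx2,hx3⟩ := hc
    exact h (tri (a:=0) (b:=1) (c:=4) (by decide) (by decide) (by decide) (by decide) ↑S (Finset.mem_coe.mpr hx1) (Finset.mem_coe.mpr hx2) (Finset.mem_coe.mpr hx3))
  · obtain ⟨hx1,hx2,hx3⟩ := hc
    exact h (tri (a:=0) (b:=3) (c:=6) (by decide) (by decide) (by decide) (by decide) ↑S (Finset.mem_coe.mpr hx1) (Finset.mem_coe.mpr hx2) (Finset.mem_coe.mpr hx3))
  · obtain ⟨hx1,hx2,hx3⟩ := hc
    exact h (tri (a:=0) (b:=4) (c:=9) (by decide) (by decide) (by decide) (by decide) ↑S (Finset.mem_coe.mpr hx1) (Finset.mem_coe.mpr hx2) (Finset.mem_coe.mpr hx3))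
  · obtain ⟨hx1,hx2,hx3⟩ := hc
    exact h (tri (a:=0) (b:=5) (c:=6) (by decide) (by decide) (by decide) (by decide) ↑S (Finset.mem_coe.mpr hx1) (Finset.mem_coe.mpr hx2) (Finset.mem_coe.mpr hx3))
  · obtain ⟨hx1,hx2,hx3⟩ := hc
    exact h (tri (a:=0) (b:=5) (c:=9) (by decide) (by decide) (by decide) (by decide) ↑S (Finset.mem_coe.mpr hx1) (Finset.mem_coe.mpr hx2) (Finset.mem_coe.mpr hx3))
  · obtain ⟨hx1,hx2,hx3⟩ := hc
    exact h (tri (a:=1) (b:=3) (c:=7) (by decide) (by decide) (by decide) (by decide) ↑S (Finset.mem_coe.mpr hx1) (Finset.mem_coe.mpr hx2) (Finset.mem_coe.mpr hx3))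
  · obtain ⟨hx1,hx2,hx3⟩ := hc
    exact h (tri (a:=1) (b:=4) (c:=8) (by decide) (by decide) (by decide) (by decide) ↑S (Finset.mem_coe.mpr hx1) (Finset.mem_coe.mpr hx2) (Finset.mem_coe.mpr hx3))
  · obtain ⟨hx1,hx2,hx3⟩ := hc
    exact h (tri (a:=1) (b:=7) (c:=8) (by decide) (by decide) (by decide) (by decide) ↑S (Finset.mem_coe.mpr hx1) (Finset.mem_coe.mpr hx2) (Finset.mem_coe.mpr hx3))
  · obtain ⟨hx1,hx2,hx3⟩ := hc
    exact h (tri (a:=2) (b:=5) (c:=6) (by decide) (by decide) (by decide) (by decide) ↑S (Finset.mem_coe.mpr hx1) (Finset.mem_coe.mpr hx2) (Finset.mem_coe.mpr hx3))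
  · obtain ⟨hx1,hx2,hx3⟩ := hc
    exact h (tri (a:=2) (b:=5) (c:=9) (by decide) (by decide) (by decide) (by decide) ↑S (Finset.mem_coe.mpr hx1) (Finset.mem_coe.mpr hx2) (Finset.mem_coe.mpr hx3))
  · obtain ⟨hx1,hx2,hx3⟩ := hc
    exact h (tri (a:=2) (b:=6) (c:=7) (by decide) (by decide) (by decide) (by decide) ↑S (Finset.mem_coe.mpr hx1) (Finset.mem_coe.mpr hx2) (Finset.mem_coe.mpr hx3))
  · obtain ⟨hx1,hx2,hx3⟩ := hc
    exact h (tri (a:=2) (b:=7) (c:=8) (by decide) (by decide) (by decide) (by decide) ↑S (Finset.mem_coe.mpr hx1) (Finset.mem_coe.mpr hx2) (Finset.mem_coe.mpr hx3))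
  · obtain ⟨hx1,hx2,hx3⟩ := hc
    exact h (tri (a:=2) (b:=8) (c:=9) (by decide) (by decide) (by decide) (by decide) ↑S (Finset.mem_coe.mpr hx1) (Finset.mem_coe.mpr hx2) (Finset.mem_coe.mpr hx3))
  · obtain ⟨hx1,hx2,hx3⟩ := hc
    exact h (tri (a:=3) (b:=6) (c:=7) (by decide) (by decide) (by decide) (by decide) ↑S (Finset.mem_coe.mpr hx1) (Finset.mem_coe.mpr hx2) (Finset.mem_coe.mpr hx3))
  · obtain ⟨hx1,hx2,hx3⟩ := hc
    exact h (tri (a:=4) (b:=8) (c:=9) (by decide) (by decide) (by decide) (by decide) ↑S (Finset.mem_coe.mpr hx1) (Finset.mem_coe.mpr hx2) (Finset.mem_coe.mpr hx3))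
  · obtain ⟨hx1,hx2,hx3,hx4,hx5⟩ := hc
    exact h (pent (a:=0) (b:=3) (c:=7) (d:=2) (e:=5) (by decide) (by decide) (by decide) (by decide) (by decide) (by decide) (by decide) (by decide) (by decide) (by decide) ↑S (Finset.mem_coe.mpr hx1) (Finset.mem_coe.mpr hx2) (Finset.mem_coe.mpr hx3) (Finset.mem_coe.mpr hx4) (Finset.mem_coe.mpr hx5))
  · obtain ⟨hx1,hx2,hx3,hx4,hx5⟩ := hc
    exact h (pent (a:=0) (b:=4) (c:=8) (d:=2) (e:=5) (by decide) (by decide) (by decide) (by decide) (by decide) (by decide) (by decide) (by decide) (by decide) (by decide) ↑S (Finset.mem_coe.mpr hx1) (Finset.mem_coe.mpr hx2) (Finset.mem_coe.mpr hx3) (Finset.mem_coe.mpr hx4) (Finset.mem_coe.mpr hx5))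
  · obtain ⟨hx1,hx2,hx3,hx4,hx5⟩ := hc
    exact h (pent (a:=0) (b:=3) (c:=7) (d:=8) (e:=4) (by decide) (by decide) (by decide) (by decide) (by decide) (by decide) (by decide) (by decide) (by decide) (by decide) ↑S (Finset.mem_coe.mpr hx1) (Finset.mem_coe.mpr hx2) (Finset.mem_coe.mpr hx3) (Finset.mem_coe.mpr hx4) (Finset.mem_coe.mpr hx5))
  · obtain ⟨hx1,hx2,hx3,hx4,hx5,hx6⟩ := hc
    exact h (hex (a:=1) (b:=3) (c:=6) (d:=2) (e:=9) (f:=4) (by decide) (by decide) (by decide) (by decide) (by decide) (by decide) (by decide) (by decide) (by decide) (by decide) (by decide) (by decide) (by decide) (by decide) (by decide) ↑S (Finset.mem_coe.mpr hx1) (Finset.mem_coe.mpr hx2) (Finset.mem_coe.mpr hx3) (Finset.mem_coe.mpr hx4) (Finset.mem_coe.mpr hx5) (Finset.mem_coe.mpr hx6))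
  · obtain ⟨hx1,hx2,hx3,hx4,hx5,hx6⟩ := hc
    exact h (hex (a:=1) (b:=3) (c:=6) (d:=5) (e:=9) (f:=4) (by decide) (by decide) (by decide) (by decide) (by decide) (by decide) (by decide) (by decide) (by decide) (by decide) (by decide) (by decide) (by decide) (by decide) (by decide) ↑S (Finset.mem_coe.mpr hx1) (Finset.mem_coe.mpr hx2) (Finset.mem_coe.mpr hx3) (Finset.mem_coe.mpr hx4) (Finset.mem_coe.mpr hx5) (Finset.mem_coe.mpr hx6))
  · obtain ⟨hx1,hx2,hx3,hx4,hx5,hx6⟩ := hc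
    exact h (hex (a:=1) (b:=3) (c:=6) (d:=5) (e:=9) (f:=8) (by decide) (by decide) (by decide) (by decide) (by decide) (by decide) (by decide) (by decide) (by decide) (by decide) (by decide) (by decide) (by decide) (by decide) (by decide) ↑S (Finset.mem_coe.mpr hx1) (Finset.mem_coe.mpr hx2) (Finset.mem_coe.mpr hx3) (Finset.mem_coe.mpr hx4) (Finset.mem_coe.mpr hx5) (Finset.mem_coe.mpr hx6))
  · obtain ⟨hx1,hx2,hx3,hx4,hx5,hx6⟩ := hc
    exact h (hex (a:=1) (b:=4) (c:=9) (d:=5) (e:=6) (f:=7) (by decide) (by decide) (by decide) (by decide) (by decide) (by decide) (by decide) (by decide) (by decide) (by decide) (by decide) (by decide) (by decide) (by decide) (by decide) ↑S (Finset.mem_coe.mpr hx1) (Finset.mem_coe.mpr hx2) (Finset.mem_coe.mpr hx3) (Finset.mem_coe.mpr hx4) (Finset.mem_coe.mpr hx5) (Finset.mem_coe.mpr hx6))
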